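/- arXiv:1403.5447 — 2 statements merged into one kernel-verified Lean document; each statement's English description precedes it below -/
import Mathlib

section
/- Let u⁻ < u⁺ be real numbers and let b₂ < b₃ < ⋯ < b_{n−1} be real numbers with u⁻ < b₂ and b_{n−1} < u⁺. Then for every x ∈ ℝ the scalar saturation function satisfies sat(x; u⁻, u⁺) = sat(x; u⁻, b₂) + Σ_{i=3}^{n−1} sat(x − b_{i−1}; 0, bᵢ − b_{i−1}) + sat(x − b_{n−1}; 0, u⁺ − b_{n−1}). -/
/-- The scalar saturation function: sat(x; a, b) = a if x ≤ a, x if a < x < b,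
and b if x ≥ b. -/
noncomputable def sat (x a b : ℝ) : ℝ := if x ≤ a then a else if x < b then x else b

theorem sat_eq_sat_add_sat_sub {x a m c : ℝ} (ham : a ≤ m) (hmc : m ≤ c) :
    sat x a c = sat x a m + sat (x - m) 0 (c - m) := by
  unfold sat
  split_ifs <;> linarith

theorem sat_eq_sat_add_sum_sat {a : ℝ} {b : ℕ → ℝ} {N : ℕ} (hb : MonotoneOn b (Set.Iic N))
    (ha : a ≤ b 0) (x : ℝ) :
    sat x a (b N) = sat x a (b 0) + ∑ i ∈ Finset.range N, sat (x - b i) 0 (b (i + 1) - b i) := by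
  induction N with
  | zero => simp
  | succ n ih =>
    have hb' : MonotoneOn b (Set.Iic n) := hb.mono (Set.Iic_subset_Iic.2 n.le_succ)
    have han : a ≤ b n := ha.trans (hb' (Set.mem_Iic.2 n.zero_le) Set.self_mem_Iic n.zero_le)
    have hbn : b n ≤ b (n + 1) := hb (Set.mem_Iic.2 n.le_succ) Set.self_mem_Iic n.le_succ
    rw [sat_eq_sat_add_sat_sub han hbn, ih hb', Finset.sum_range_succ, add_assoc]

/-- Here `b 0, …, b N` are the paper's `b₂ < ⋯ < b_{n−1}`, so `n = N + 3`. -/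
theorem stmt_12_general (um up : ℝ) (N : ℕ) (b : ℕ → ℝ)
    (hmono : ∀ i < N, b i < b (i + 1)) (h0 : um < b 0) (hN : b N < up) :
    ∀ x : ℝ,
      sat x um up
        = sat x um (b 0)
          + (∑ i ∈ Finset.range N, sat (x - b i) 0 (b (i + 1) - b i))
          + sat (x - b N) 0 (up - b N) := by
  intro x
  have hb : MonotoneOn b (Set.Iic N) := (strictMonoOn_Iic_of_lt_succ hmono).monotoneOn
  have humN : um ≤ b N := h0.le.trans (hb (Set.mem_Iic.2 N.zero_le) Set.self_mem_Iic N.zero_le)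
  rw [sat_eq_sat_add_sat_sub humN hN.le, sat_eq_sat_add_sum_sat hb h0.le]

/-- splitting identity for the scalar saturation function.  Here
`b 0, b 1, …, b N` play the role of the intermediate points `b₂ < ⋯ < b_{n−1}`
(so `N + 1` intermediate points, i.e. `n = N + 3`):
sat(x; u⁻, u⁺) = sat(x; u⁻, b₂) + Σ_{i=3}^{n−1} sat(x − b_{i−1}; 0, bᵢ − b_{i−1})
                 + sat(x − b_{n−1}; 0, u⁺ − b_{n−1}). -/
theorem stmt_12 (um up : ℝ) (hu : um < up) (N : ℕ) (b : ℕ → ℝ)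
    (hmono : ∀ i < N, b i < b (i + 1)) (h0 : um < b 0) (hN : b N < up) :
    ∀ x : ℝ,
      sat x um up
        = sat x um (b 0)
          + (∑ i ∈ Finset.range N, sat (x - b i) 0 (b (i + 1) - b i))
          + sat (x - b N) 0 (up - b N) :=
  stmt_12_general um up N b hmono h0 hN
end

section
/- Consider the constrained closed-loop system with disturbance ẋ = B·sat(−Bᵀ∇H(x) − x_c; u⁻, u⁺) + E·d̄, ẋ_c = Bᵀ∇H(x), and suppose d̄ satisfies the matching condition: there exists x̄_c ∈ ℝᵐ with B x̄_c = E d̄. Then, under the change of variable x̃_c = x_c − x̄_c, the system is equivalent to the disturbance-free constrained system with shifted constraint intervals: ẋ = B·sat(−Bᵀ∇H(x) − x̃_c; u⁻ + x̄_c, u⁺ + x̄_c), ẋ̃_c = Bᵀ∇H(x); that is, (x(t), x_c(t)) solves the first system if and only if (x(t), x_c(t) − x̄_c) solves the second. -/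
open Matrix

/-- The multidimensional saturation function, defined componentwise. -/
noncomputable def satVec {m : ℕ} (x a b : Fin m → ℝ) : Fin m → ℝ :=
  fun i => sat (x i) (a i) (b i)

lemma sat_add_add_add (x a b c : ℝ) : sat (x + c) (a + c) (b + c) = sat x a b + c := by
  unfold sat
  simp only [add_le_add_iff_right, add_lt_add_iff_right]
  split_ifs <;> rfl

lemma satVec_add_add_add {m : ℕ} (x a b c : Fin m → ℝ) :
    satVec (x + c) (a + c) (b + c) = satVec x a b + c :=
  funext fun i => sat_add_add_add (x i) (a i) (b i) (c i)

lemma mulVec_satVec_sub_shift {n m : ℕ} (B : Matrix (Fin n) (Fin m) ℝ)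
    (y z a b c : Fin m → ℝ) :
    B *ᵥ satVec (y - (z - c)) (a + c) (b + c) = B *ᵥ satVec (y - z) a b + B *ᵥ c := by
  rw [sub_sub_eq_add_sub, add_sub_right_comm, satVec_add_add_add, mulVec_add]

theorem stmt_17_general (n m k : ℕ)
    (B : Matrix (Fin n) (Fin m) ℝ)
    (E : Matrix (Fin n) (Fin k) ℝ)
    (gradH : (Fin n → ℝ) → (Fin n → ℝ))
    (um up : Fin m → ℝ)
    (d : Fin k → ℝ) (xbarc : Fin m → ℝ)
    -- the matching condition
    (hmatch : B.mulVec xbarc = E.mulVec d)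
    (x : ℝ → (Fin n → ℝ)) (xc : ℝ → (Fin m → ℝ)) :
    -- (x, x_c) solves the constrained system with disturbance …
    (∀ t : ℝ, 0 ≤ t →
      HasDerivAt x
        (B.mulVec (satVec (-(Bᵀ.mulVec (gradH (x t))) - xc t) um up)
          + E.mulVec d) t ∧
      HasDerivAt xc (Bᵀ.mulVec (gradH (x t))) t)
    -- … iff (x, x_c − x̄_c) solves the disturbance-free constrained system with
    -- shifted constraint intervals
    ↔ (∀ t : ℝ, 0 ≤ t →
      HasDerivAt x
        (B.mulVec (satVec (-(Bᵀ.mulVec (gradH (x t))) - (xc t - xbarc))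
          (um + xbarc) (up + xbarc))) t ∧
      HasDerivAt (fun s => xc s - xbarc) (Bᵀ.mulVec (gradH (x t))) t) := by
  simp only [mulVec_satVec_sub_shift, hmatch, hasDerivAt_sub_const_iff]

/-- If d̄ satisfies the matching condition B x̄_c = E d̄, then under
the change of variable x̃_c = x_c − x̄_c the constrained closed-loop system with
disturbance ẋ = B sat(−Bᵀ∇H(x) − x_c; u⁻, u⁺) + E d̄, ẋ_c = Bᵀ∇H(x) is equivalent
to the disturbance-free system with shifted constraint intervals
ẋ = B sat(−Bᵀ∇H(x) − x̃_c; u⁻ + x̄_c, u⁺ + x̄_c), ẋ̃_c = Bᵀ∇H(x): (x, x_c) solves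
the first system iff (x, x_c − x̄_c) solves the second. -/
theorem stmt_17 (n m k : ℕ) (tl hd : Fin m → Fin n) (hloop : ∀ e, tl e ≠ hd e)
    (B : Matrix (Fin n) (Fin m) ℝ)
    (hB : ∀ i j, B i j = if hd j = i then 1 else if tl j = i then -1 else 0)
    (E : Matrix (Fin n) (Fin k) ℝ)
    (hE : ∀ j : Fin k, ∃ i : Fin n,
      (E i j = 1 ∨ E i j = -1) ∧ ∀ i', i' ≠ i → E i' j = 0)
    (H : (Fin n → ℝ) → ℝ) (gradH : (Fin n → ℝ) → (Fin n → ℝ))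
    (hH : ContDiff ℝ 1 H)
    (hgradH : ∀ x v, fderiv ℝ H x v = ∑ i, gradH x i * v i)
    (um up : Fin m → ℝ) (hu : ∀ i, um i < up i)
    (d : Fin k → ℝ) (xbarc : Fin m → ℝ)
    -- the matching condition
    (hmatch : B.mulVec xbarc = E.mulVec d)
    (x : ℝ → (Fin n → ℝ)) (xc : ℝ → (Fin m → ℝ)) :
    -- (x, x_c) solves the constrained system with disturbance …
    (∀ t : ℝ, 0 ≤ t →
      HasDerivAt x
        (B.mulVec (satVec (-(Bᵀ.mulVec (gradH (x t))) - xc t) um up)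
          + E.mulVec d) t ∧
      HasDerivAt xc (Bᵀ.mulVec (gradH (x t))) t)
    -- … iff (x, x_c − x̄_c) solves the disturbance-free constrained system with
    -- shifted constraint intervals
    ↔ (∀ t : ℝ, 0 ≤ t →
      HasDerivAt x
        (B.mulVec (satVec (-(Bᵀ.mulVec (gradH (x t))) - (xc t - xbarc))
          (um + xbarc) (up + xbarc))) t ∧
      HasDerivAt (fun s => xc s - xbarc) (Bᵀ.mulVec (gradH (x t))) t) :=
  stmt_17_general n m k B E gradH um up d xbarc hmatch x xc
end
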